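/- arXiv:math/0203228 — 3 statements merged into one kernel-verified Lean document; each statement's English description precedes it below -/
import Mathlib

section
/- Let Q be an n×n real matrix and θ a 1×n real row vector such that the pair (Q, θ) is observable, i.e. for vectors w, the condition θ·exp(tQ)·w = 0 for all t ≥ 0 implies w = 0. Let F be an m×m matrix and φ a 1×m row vector with (F, φ) observable. Suppose for each w⁰ ∈ ℝⁿ there exists z⁰ ∈ ℝᵐ with φ·exp(tF)·z⁰ = θ·exp(tQ)·w⁰ for all t ≥ 0. Then the map T sending w⁰ to the unique such z⁰ is a well-defined injective linear map satisfying F·T = T·Q. -/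
/-!
The output of `ẋ = F x, y = φ x` from `x(0) = z` is `t ↦ φ ⬝ᵥ exp (t • F) *ᵥ z`, and by
observability it determines `z`. Hence `T w` is unique, which makes `T` additive and homogeneous,
and `T` is injective by observability of `(Q, θ)`. Differentiating the identity of outputs on
`[0, ∞)` (one-sidedly at `0`) shows that `F *ᵥ T w` and `T (Q *ᵥ w)` have the same output, so
they agree.
-/

open Matrix

/-- Observability of a pair `(A, c)`. -/
def Observable {n : ℕ} (A : Matrix (Fin n) (Fin n) ℝ) (c : Fin n → ℝ) : Prop :=
  ∀ v : Fin n → ℝ, (∀ t : ℝ, 0 ≤ t → c ⬝ᵥ (NormedSpace.exp (t • A)) *ᵥ v = 0) → v = 0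

open NormedSpace Set

noncomputable def outputSignal {m : ℕ} (F : Matrix (Fin m) (Fin m) ℝ) (φ z : Fin m → ℝ) :
    ℝ → ℝ :=
  fun t => φ ⬝ᵥ exp (t • F) *ᵥ z

theorem HasDerivAt.eq_of_eqOn {f g : ℝ → ℝ} {f' g' x : ℝ} {s : Set ℝ}
    (hf : HasDerivAt f f' x) (hg : HasDerivAt g g' x) (hfg : EqOn f g s)
    (hs : UniqueDiffWithinAt ℝ s x) (hx : x ∈ s) : f' = g' :=
  hs.eq_deriv s (hf.hasDerivWithinAt.congr_of_mem (fun _ hy => (hfg hy).symm) hx)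
    hg.hasDerivWithinAt

namespace outputSignal

variable {m : ℕ} {F : Matrix (Fin m) (Fin m) ℝ} {φ : Fin m → ℝ}

theorem add (z z' : Fin m → ℝ) :
    outputSignal F φ (z + z') = outputSignal F φ z + outputSignal F φ z' := by
  ext t
  simp only [outputSignal, mulVec_add, dotProduct_add, Pi.add_apply]

theorem smul (c : ℝ) (z : Fin m → ℝ) : outputSignal F φ (c • z) = c • outputSignal F φ z := by
  ext t
  simp only [outputSignal, mulVec_smul, dotProduct_smul, Pi.smul_apply]

theorem zero : outputSignal F φ 0 = 0 := by
  ext t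
  simp [outputSignal]

attribute [local instance] Matrix.linftyOpNormedRing Matrix.linftyOpNormedAlgebra in
theorem hasDerivAt (z : Fin m → ℝ) (t : ℝ) :
    HasDerivAt (outputSignal F φ z) (outputSignal F φ (F *ᵥ z) t) t := by
  let L : Matrix (Fin m) (Fin m) ℝ →ₗ[ℝ] ℝ :=
    { toFun := fun M => φ ⬝ᵥ M *ᵥ z
      map_add' := fun M N => by simp only [add_mulVec, dotProduct_add]
      map_smul' := fun c M => by simp only [smul_mulVec, dotProduct_smul, RingHom.id_apply] }
  refine (L.toContinuousLinearMap.hasFDerivAt.comp_hasDerivAt t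
    (hasDerivAt_exp_smul_const F t)).congr_deriv ?_
  rw [outputSignal, mulVec_mulVec]
  rfl

theorem eqOn_mulVec_of_eqOn {n : ℕ} {Q : Matrix (Fin n) (Fin n) ℝ} {θ : Fin n → ℝ}
    {z : Fin m → ℝ} {w : Fin n → ℝ} {a : ℝ}
    (h : EqOn (outputSignal F φ z) (outputSignal Q θ w) (Ici a)) :
    EqOn (outputSignal F φ (F *ᵥ z)) (outputSignal Q θ (Q *ᵥ w)) (Ici a) := fun t ht =>
  (hasDerivAt z t).eq_of_eqOn (hasDerivAt w t) h (uniqueDiffOn_Ici a t ht) ht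

end outputSignal

namespace Observable

variable {m : ℕ} {F : Matrix (Fin m) (Fin m) ℝ} {φ : Fin m → ℝ}

theorem eq_zero_of_eqOn_outputSignal (h : Observable F φ) {z : Fin m → ℝ}
    (hz : EqOn (outputSignal F φ z) 0 (Ici 0)) : z = 0 :=
  h z hz

theorem eq_of_eqOn_outputSignal (h : Observable F φ) {z z' : Fin m → ℝ}
    (hz : EqOn (outputSignal F φ z) (outputSignal F φ z') (Ici 0)) : z = z' := by
  refine sub_eq_zero.1 (h.eq_zero_of_eqOn_outputSignal fun t ht => ?_)
  rw [sub_eq_add_neg, ← neg_one_smul ℝ z', outputSignal.add, outputSignal.smul]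
  simp [hz ht]

variable {n : ℕ} {Q : Matrix (Fin n) (Fin n) ℝ} {θ : Fin n → ℝ}

theorem exists_linearMap_eqOn_outputSignal (hFφ : Observable F φ)
    (hmatch : ∀ w, ∃ z, EqOn (outputSignal F φ z) (outputSignal Q θ w) (Ici 0)) :
    ∃ T : (Fin n → ℝ) →ₗ[ℝ] (Fin m → ℝ),
      ∀ w, EqOn (outputSignal F φ (T w)) (outputSignal Q θ w) (Ici 0) := by
  choose T hT using hmatch
  refine ⟨{ toFun := T, map_add' := fun w w' => ?_, map_smul' := fun c w => ?_ }, hT⟩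
  · refine hFφ.eq_of_eqOn_outputSignal fun t ht => ?_
    simp only [outputSignal.add, Pi.add_apply, hT _ ht]
  · refine hFφ.eq_of_eqOn_outputSignal fun t ht => ?_
    simp only [outputSignal.smul, Pi.smul_apply, RingHom.id_apply, hT _ ht]

theorem injective_of_eqOn_outputSignal (hQθ : Observable Q θ)
    {T : (Fin n → ℝ) →ₗ[ℝ] (Fin m → ℝ)}
    (hT : ∀ w, EqOn (outputSignal F φ (T w)) (outputSignal Q θ w) (Ici 0)) :
    Function.Injective T := by
  refine (injective_iff_map_eq_zero T).2 fun w hw => hQθ.eq_zero_of_eqOn_outputSignal ?_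
  simpa [hw, outputSignal.zero] using (hT w).symm

theorem mulVec_apply_eq_apply_mulVec (hFφ : Observable F φ)
    {T : (Fin n → ℝ) → (Fin m → ℝ)}
    (hT : ∀ w, EqOn (outputSignal F φ (T w)) (outputSignal Q θ w) (Ici 0)) (w : Fin n → ℝ) :
    F *ᵥ T w = T (Q *ᵥ w) :=
  hFφ.eq_of_eqOn_outputSignal <|
    (outputSignal.eqOn_mulVec_of_eqOn (hT w)).trans (hT (Q *ᵥ w)).symm

end Observable

theorem stmt_3 {n m : ℕ}
    (Q : Matrix (Fin n) (Fin n) ℝ) (θ : Fin n → ℝ)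
    (F : Matrix (Fin m) (Fin m) ℝ) (φ : Fin m → ℝ)
    (hQθ : Observable Q θ) (hFφ : Observable F φ)
    (hmatch : ∀ w₀ : Fin n → ℝ, ∃ z₀ : Fin m → ℝ,
      ∀ t : ℝ, 0 ≤ t →
        φ ⬝ᵥ (NormedSpace.exp (t • F)) *ᵥ z₀ = θ ⬝ᵥ (NormedSpace.exp (t • Q)) *ᵥ w₀) :
    ∃ T : (Fin n → ℝ) →ₗ[ℝ] (Fin m → ℝ),
      Function.Injective T ∧
      (∀ w₀ : Fin n → ℝ, ∀ t : ℝ, 0 ≤ t →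
        φ ⬝ᵥ (NormedSpace.exp (t • F)) *ᵥ (T w₀) = θ ⬝ᵥ (NormedSpace.exp (t • Q)) *ᵥ w₀) ∧
      (∀ w₀ : Fin n → ℝ, F *ᵥ (T w₀) = T (Q *ᵥ w₀)) := by
  obtain ⟨T, hT⟩ := hFφ.exists_linearMap_eqOn_outputSignal hmatch
  exact ⟨T, hQθ.injective_of_eqOn_outputSignal hT, fun w _ ht => hT w ht,
    hFφ.mulVec_apply_eq_apply_mulVec hT⟩
end

section
/- Every square real matrix is similar to its transpose. -/
/-!
A similarity `Aᵀ = S * A * S⁻¹` is the same as an invertible `S` with `Aᵀ * S = S * A`, i.e. a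
nondegenerate bilinear form for which `A` is self-adjoint. By the structure theorem over the PID
`K[X]`, the space `Kⁿ`, made a `K[X]`-module by letting `X` act as `A`, is isomorphic to a finite
product of rings `K[X] ⧸ (gᵢ)`. On such a commutative ring `R` every multiplication operator is
self-adjoint for the form `(a, b) ↦ φ (a * b)`, and this form is nondegenerate when `φ` is
"coefficient of `X ^ (deg gᵢ - 1)` of the reduced representative" on each factor.
-/

open Matrix Polynomial

variable {K : Type*} [Field K]

section Frobenius

variable {A : Type*} [CommRing A] [Algebra K A]

def IsFrobeniusFunctional (φ : A →ₗ[K] K) : Prop :=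
  ∀ a : A, a ≠ 0 → ∃ b, φ (a * b) ≠ 0

lemma IsFrobeniusFunctional.pi {ι : Type*} [Fintype ι] [DecidableEq ι] {A : ι → Type*}
    [∀ i, CommRing (A i)] [∀ i, Algebra K (A i)] {φ : ∀ i, A i →ₗ[K] K}
    (hφ : ∀ i, IsFrobeniusFunctional (φ i)) :
    IsFrobeniusFunctional (∑ i, φ i ∘ₗ LinearMap.proj i) := by
  intro a ha
  obtain ⟨i, hi⟩ := Function.ne_iff.mp ha
  obtain ⟨b, hb⟩ := hφ i (a i) hi
  refine ⟨Pi.single i b, ?_⟩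
  rw [← Pi.single_mul_right, LinearMap.sum_apply,
    Finset.sum_eq_single_of_mem i (Finset.mem_univ i) fun j _ hj => by simp [hj]]
  simpa using hb

lemma exists_isFrobeniusFunctional_adjoinRoot {q : K[X]} (hq : q.Monic) :
    ∃ φ : AdjoinRoot q →ₗ[K] K, IsFrobeniusFunctional φ := by
  refine ⟨lcoeff K (q.natDegree - 1) ∘ₗ AdjoinRoot.modByMonicHom hq, fun a ha => ?_⟩
  obtain ⟨f, rfl⟩ := AdjoinRoot.mk_surjective a
  have hpf : AdjoinRoot.mk q (f %ₘ q) = AdjoinRoot.mk q f := by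
    rw [← AdjoinRoot.modByMonicHom_mk hq]
    exact AdjoinRoot.mk_leftInverse hq _
  set p := f %ₘ q
  have hp : p ≠ 0 := by
    rintro h
    exact ha (by rw [← hpf, h, map_zero])
  have hlt : p.natDegree < q.natDegree := natDegree_lt_natDegree hp (degree_modByMonic_lt _ hq)
  set k := q.natDegree - 1 - p.natDegree
  have hk : p.natDegree + k = q.natDegree - 1 := by omega
  -- `p * X ^ k` is its own remainder mod `q`, with leading coefficient in degree `deg q - 1`
  have hred : p * X ^ k %ₘ q = p * X ^ k := by
    rw [modByMonic_eq_self_iff hq]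
    exact degree_lt_degree (by rw [natDegree_mul_X_pow k hp]; omega)
  refine ⟨AdjoinRoot.mk q (X ^ k), ?_⟩
  rw [← hpf, ← map_mul, LinearMap.comp_apply, AdjoinRoot.modByMonicHom_mk, hred, lcoeff_apply,
    ← hk, coeff_mul_X_pow]
  exact leadingCoeff_ne_zero.mpr hp

lemma exists_isFrobeniusFunctional_quotient_span_singleton {g : K[X]} (hg : g ≠ 0) :
    ∃ φ : (K[X] ⧸ Ideal.span {g}) →ₗ[K] K, IsFrobeniusFunctional φ := by
  have hunit : IsUnit (C g.leadingCoeff⁻¹) :=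
    isUnit_C.mpr (inv_ne_zero (leadingCoeff_ne_zero.mpr hg)).isUnit
  rw [← Ideal.span_singleton_mul_right_unit hunit]
  exact exists_isFrobeniusFunctional_adjoinRoot (monic_mul_leadingCoeff_inv hg)

end Frobenius

section SelfAdjoint

variable {V : Type*} [AddCommGroup V] [Module K V]

lemma IsFrobeniusFunctional.exists_separatingLeft_isAdjointPair {A : Type*} [CommRing A]
    [Algebra K A] {φ : A →ₗ[K] K} (hφ : IsFrobeniusFunctional φ) (f : Module.End K V)
    (e : V ≃ₗ[K] A) (c : A) (he : ∀ v, e (f v) = c * e v) :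
    ∃ B : LinearMap.BilinForm K V, B.SeparatingLeft ∧ LinearMap.IsAdjointPair B B f f := by
  refine ⟨((LinearMap.mul K A).compr₂ φ).compl₁₂ (e : V →ₗ[K] A) e, fun u hu => ?_, fun u v => ?_⟩
  · by_contra hu0
    obtain ⟨b, hb⟩ := hφ (e u) (by simpa using hu0)
    exact hb (by simpa using hu (e.symm b))
  · simp [he, mul_left_comm, mul_assoc]

theorem Module.End.exists_separatingLeft_isAdjointPair [FiniteDimensional K V]
    (f : Module.End K V) :
    ∃ B : LinearMap.BilinForm K V, B.SeparatingLeft ∧ LinearMap.IsAdjointPair B B f f := by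
  classical
  obtain ⟨ι, _, p, hp, n, ⟨e⟩⟩ := Module.equiv_directSum_of_isTorsion
    (Module.AEval.isTorsion_of_finiteDimensional K V f)
  choose φ hφ using fun i =>
    exists_isFrobeniusFunctional_quotient_span_singleton (pow_ne_zero (n i) (hp i).ne_zero)
  let e' : Module.AEval' f ≃ₗ[K[X]] Π i, K[X] ⧸ Ideal.span {p i ^ n i} :=
    e.trans (DirectSum.linearEquivFunOnFintype _ _ _)
  refine (IsFrobeniusFunctional.pi hφ).exists_separatingLeft_isAdjointPair f
    ((Module.AEval'.of f).trans (e'.restrictScalars K)) (algebraMap K[X] _ X) fun v => ?_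
  rw [← Algebra.smul_def]
  exact (congrArg e' (Module.AEval'.X_smul_of f v).symm).trans (map_smul e' X _)

end SelfAdjoint

theorem Matrix.exists_transpose_eq_inv_mul_mul {ι : Type*} [Fintype ι] [DecidableEq ι]
    (A : Matrix ι ι K) : ∃ P : Matrix ι ι K, IsUnit P.det ∧ Aᵀ = P⁻¹ * A * P := by
  obtain ⟨B, hB, hAB⟩ := Module.End.exists_separatingLeft_isAdjointPair (toLin' A)
  set S := LinearMap.toMatrix₂' K B
  have hS : IsUnit S.det := isUnit_iff_ne_zero.mpr <|
    LinearMap.separatingLeft_toLinearMap₂'_iff_det_ne_zero.mp (by rwa [toLinearMap₂'_toMatrix'])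
  have hAS : Aᵀ * S = S * A := by
    rw [← Matrix.IsAdjointPair, ← isAdjointPair_toLinearMap₂', toLinearMap₂'_toMatrix']
    exact hAB
  refine ⟨S⁻¹, isUnit_nonsing_inv_det S hS, ?_⟩
  rw [nonsing_inv_nonsing_inv S hS, ← hAS, Matrix.mul_assoc, mul_nonsing_inv S hS,
    Matrix.mul_one]

theorem stmt_5 {n : ℕ} (A : Matrix (Fin n) (Fin n) ℝ) :
    ∃ P : Matrix (Fin n) (Fin n) ℝ, IsUnit P.det ∧ Aᵀ = P⁻¹ * A * P :=
  A.exists_transpose_eq_inv_mul_mul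
end

section
/- For the chemotaxis system ẋ₁ = a₁ − a₂x₁ + a₃x₂ − a₄x₁u, ẋ₂ = a₅ − a₆x₂ + a₄x₁u with output h(x) = (a₁+a₅) − (a₂x₁ + (a₆−a₃)x₂), the Lie derivative of h along the input vector field g = (−a₄x₁, a₄x₁) equals L_g h(x) = D·x₁ where D = a₄·(a₂ + a₃ − a₆); hence if a₂ + a₃ ≠ a₆ and a₄ > 0, then L_g h(x) ≠ 0 for all x with x₁ > 0. -/
theorem stmt_12 (a₁ a₂ a₃ a₄ a₅ a₆ : ℝ)
    (ha₁ : 0 < a₁) (ha₂ : 0 < a₂) (ha₃ : 0 < a₃) (ha₄ : 0 < a₄)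
    (ha₅ : 0 < a₅) (ha₆ : 0 < a₆) :
    ∀ x₁ x₂ : ℝ,
      (-a₂) * (-(a₄ * x₁)) + (-(a₆ - a₃)) * (a₄ * x₁) = (a₄ * (a₂ + a₃ - a₆)) * x₁ ∧
      (a₂ + a₃ ≠ a₆ → 0 < x₁ →
        (-a₂) * (-(a₄ * x₁)) + (-(a₆ - a₃)) * (a₄ * x₁) ≠ 0) := by
  intro x₁ x₂
  constructor
  · ring
  · intro hne hx
    have : (-a₂) * (-(a₄ * x₁)) + (-(a₆ - a₃)) * (a₄ * x₁) = (a₄ * (a₂ + a₃ - a₆)) * x₁ := by ring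
    rw [this]
    apply mul_ne_zero _ (ne_of_gt hx)
    apply mul_ne_zero (ne_of_gt ha₄)
    intro h
    exact hne (by linarith)
end
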